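/- Let I, J be intervals with |J| ≤ |I|, let N ∈ ℕ, 0 < θ ≤ 1, R ≥ 3, and λ ≥ R^{−1}·(|J|^{−1} diam(I ∪ J))^θ. Let Φ_{λJ} be a smooth cutoff supported in 4λJ with |Φ_{λJ}^{(n)}(x)| ≲ (λ|J|)^{−n}. Then |λJ|^{−1/2}·Φ_{λJ} is an L²-normalized bump function adapted to I with order ⌊θN/4⌋ and constant R^{2N}·(|J|/|I|)^{θN/4 − 1/2}·λ^{(N−1)/2}. -/

import Mathlib

/-!
Write `s = |I|/|J| ≥ 1`, `u = (Rλ)^{1/θ}`, `M = ⌊θN/4⌋` and `t = 1 + |x - c(I)|/|I|`.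
The hypothesis on `λ` says `(diam(I ∪ J)/|J|)^θ ≤ Rλ`, so `s^θ ≤ Rλ`, `diam(I ∪ J) ≤ u|J|`
and (as `θ ≤ 1`) `λ ≤ u`. Off `2λJ` all derivatives of `Φ` vanish; on it, `t s ≤ 4u`.
After taking logarithms the required bound becomes `s^{n + θN/4} t^M ≤ 4^N R^{2N} λ^{N/2 + n}`,
which follows from `t^M ≤ (4u/s)^M`, `u^M ≤ (Rλ)^{N/4}` (since `M ≤ θN/4`) and
`s^{n + θN/4 - M} ≤ (s^θ)^{n + N/4} ≤ (Rλ)^{n + N/4}`.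
-/

/-- An `L²`-normalized bump function adapted to the interval with center `c` and
length `l`, with constant `C` and order `N`. -/
def IsBump (c l C : ℝ) (N : ℕ) (φ : ℝ → ℝ) : Prop :=
  ContDiff ℝ N φ ∧
    ∀ n ≤ N, ∀ x : ℝ,
      |iteratedDeriv n φ x| ≤ C * l ^ (-(1/2 : ℝ) - n) * (1 + |x - c| / l) ^ (-(N : ℝ))

/-- `diam(I ∪ J)` for intervals given by centers and lengths. -/
noncomputable def diamUnion (c1 l1 c2 l2 : ℝ) : ℝ :=
  max (c1 + l1 / 2) (c2 + l2 / 2) - min (c1 - l1 / 2) (c2 - l2 / 2)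

open Real

lemma le_diamUnion (c1 l1 c2 l2 : ℝ) : l1 ≤ diamUnion c1 l1 c2 l2 := by
  unfold diamUnion
  linarith [le_max_left (c1 + l1 / 2) (c2 + l2 / 2), min_le_left (c1 - l1 / 2) (c2 - l2 / 2)]

lemma abs_sub_le_diamUnion {l1 l2 : ℝ} (c1 c2 : ℝ) (h1 : 0 ≤ l1) (h2 : 0 ≤ l2) :
    |c2 - c1| ≤ diamUnion c1 l1 c2 l2 := by
  unfold diamUnion
  rw [abs_sub_le_iff]
  constructor <;>
    linarith [le_max_left (c1 + l1 / 2) (c2 + l2 / 2), le_max_right (c1 + l1 / 2) (c2 + l2 / 2),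
      min_le_left (c1 - l1 / 2) (c2 - l2 / 2), min_le_right (c1 - l1 / 2) (c2 - l2 / 2)]

lemma iteratedDeriv_eq_zero_of_lt_abs_sub {Φ : ℝ → ℝ} {c r x : ℝ}
    (hΦ : ∀ y, r < |y - c| → Φ y = 0) (hx : r < |x - c|) (n : ℕ) :
    iteratedDeriv n Φ x = 0 := by
  have hopen : IsOpen {y : ℝ | r < |y - c|} := isOpen_lt continuous_const (by fun_prop)
  have hzero : Φ =ᶠ[nhds x] fun _ => 0 := by
    filter_upwards [hopen.mem_nhds hx] with y hy using hΦ y hy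
  rw [hzero.iteratedDeriv_eq, iteratedDeriv_fun_const_zero]

lemma one_add_abs_sub_div_mul_div_le {cI lI cJ lJ lam u x : ℝ} (hlI : 0 < lI) (hlJ : 0 < lJ)
    (hlam : lam ≤ u) (hD : diamUnion cI lI cJ lJ ≤ u * lJ) (hx : |x - cJ| ≤ 2 * lam * lJ) :
    (1 + |x - cI| / lI) * (lI / lJ) ≤ 4 * u := by
  have hcJ := abs_sub_le_diamUnion cI cJ hlI.le hlJ.le
  have hxI : |x - cI| ≤ |x - cJ| + |cJ - cI| := abs_sub_le x cJ cI
  have hlamJ : lam * lJ ≤ u * lJ := mul_le_mul_of_nonneg_right hlam hlJ.le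
  rw [one_add_div hlI.ne', div_mul_div_cancel₀ hlI.ne', div_le_iff₀ hlJ]
  linarith [le_diamUnion cI lI cJ lJ]

lemma rpow_div_le_mul_of_diamUnion {cI lI cJ lJ θ R lam : ℝ} (hθ : 0 < θ) (hR : 0 < R)
    (hlJ : 0 < lJ) (hlI : 0 ≤ lI) (hlam : R⁻¹ * (diamUnion cI lI cJ lJ / lJ) ^ θ ≤ lam) :
    (lI / lJ) ^ θ ≤ R * lam :=
  (rpow_le_rpow (by positivity) (by gcongr; exact le_diamUnion cI lI cJ lJ) hθ.le).trans
    ((inv_mul_le_iff₀ hR).1 hlam)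

lemma diamUnion_le_rpow_inv_mul {cI lI cJ lJ θ R lam : ℝ} (hθ : 0 < θ) (hR : 0 < R)
    (hlJ : 0 < lJ) (hlI : 0 ≤ lI) (hlam : R⁻¹ * (diamUnion cI lI cJ lJ / lJ) ^ θ ≤ lam) :
    diamUnion cI lI cJ lJ ≤ (R * lam) ^ θ⁻¹ * lJ := by
  have hD : 0 ≤ diamUnion cI lI cJ lJ / lJ := div_nonneg (hlI.trans (le_diamUnion ..)) hlJ.le
  rw [← div_le_iff₀ hlJ, ← rpow_rpow_inv hD hθ.ne']
  exact rpow_le_rpow (by positivity) ((inv_mul_le_iff₀ hR).1 hlam) (by positivity)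

lemma le_rpow_inv_mul {R lam θ : ℝ} (hR : 1 ≤ R) (hP : 1 ≤ R * lam) (hθ : 0 < θ)
    (hθ1 : θ ≤ 1) :
    lam ≤ (R * lam) ^ θ⁻¹ :=
  calc lam ≤ R * lam := le_mul_of_one_le_left (by nlinarith) hR
    _ = (R * lam) ^ (1 : ℝ) := (rpow_one _).symm
    _ ≤ (R * lam) ^ θ⁻¹ := rpow_le_rpow_of_exponent_le hP ((one_le_inv₀ hθ).2 hθ1)

lemma rpow_mul_pow_le {s t R lam θ : ℝ} {n M N : ℕ} (hθ : 0 < θ) (hθ1 : θ ≤ 1) (hR : 1 ≤ R)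
    (hs : 1 ≤ s) (hsP : s ^ θ ≤ R * lam) (ht0 : 0 ≤ t) (hts : t * s ≤ 4 * (R * lam) ^ θ⁻¹)
    (hnM : n ≤ M) (hM : (M : ℝ) ≤ θ * N / 4) :
    s ^ ((n : ℝ) + θ * N / 4) * t ^ M ≤
      4 ^ N * R ^ (2 * (N : ℝ)) * lam ^ ((N : ℝ) / 2 + n) := by
  set P := R * lam
  have hP : 1 ≤ P := (one_le_rpow hs hθ.le).trans hsP
  have hlam : 0 ≤ lam := nonneg_of_mul_nonneg_right (by linarith) (by linarith : (0 : ℝ) < R)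
  have hnM' : (n : ℝ) ≤ M := by exact_mod_cast hnM
  have huM : (P ^ θ⁻¹) ^ M ≤ P ^ ((N : ℝ) / 4) := by
    rw [← rpow_natCast, ← rpow_mul (by positivity)]
    exact rpow_le_rpow_of_exponent_le hP (by rw [inv_mul_eq_div, div_le_iff₀ hθ]; linarith)
  have hsexp : s ^ ((n : ℝ) + θ * N / 4 - M) ≤ P ^ ((n : ℝ) + N / 4) := by
    calc s ^ ((n : ℝ) + θ * N / 4 - M) ≤ s ^ (θ * ((n : ℝ) + N / 4)) :=
          rpow_le_rpow_of_exponent_le hs (by nlinarith)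
      _ = (s ^ θ) ^ ((n : ℝ) + N / 4) := rpow_mul (by positivity) _ _
      _ ≤ P ^ ((n : ℝ) + N / 4) := rpow_le_rpow (by positivity) hsP (by positivity)
  calc s ^ ((n : ℝ) + θ * N / 4) * t ^ M
      = s ^ ((n : ℝ) + θ * N / 4 - M) * (t * s) ^ M := by
        rw [mul_pow, ← rpow_natCast s M, mul_left_comm, ← rpow_add (by positivity)]
        ring_nf
    _ ≤ P ^ ((n : ℝ) + N / 4) * (4 * P ^ θ⁻¹) ^ M := by gcongr
    _ ≤ P ^ ((n : ℝ) + N / 4) * (4 ^ M * P ^ ((N : ℝ) / 4)) := by rw [mul_pow]; gcongr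
    _ = 4 ^ M * R ^ ((N : ℝ) / 2 + n) * lam ^ ((N : ℝ) / 2 + n) := by
        rw [mul_left_comm, ← rpow_add (by positivity), mul_rpow (by positivity) hlam]
        ring_nf
    _ ≤ 4 ^ N * R ^ (2 * (N : ℝ)) * lam ^ ((N : ℝ) / 2 + n) := by
        have hθN : θ * N ≤ N := mul_le_of_le_one_left (by positivity) hθ1
        have hMN : M ≤ N := by exact_mod_cast (show (M : ℝ) ≤ N by linarith)
        gcongr
        · norm_num
        · linarith

lemma rpow_mul_le_of_rpow_mul_pow_le {C R lam lI lJ t a : ℝ} {n M N : ℕ} (hC : 0 < C)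
    (hR : 0 < R) (hlam : 0 < lam) (hlI : 0 < lI) (hlJ : 0 < lJ) (ht : 0 < t)
    (h : (lI / lJ) ^ ((n : ℝ) + a) * t ^ M ≤
      4 ^ N * R ^ (2 * (N : ℝ)) * lam ^ ((N : ℝ) / 2 + n)) :
    (lam * lJ) ^ (-(1/2 : ℝ)) * (C * (lam * lJ) ^ (-(n : ℝ))) ≤
      4 ^ N * C * R ^ (2 * (N : ℝ)) * (lJ / lI) ^ (a - 1/2) * lam ^ (((N : ℝ) - 1) / 2) *
        lI ^ (-(1/2 : ℝ) - n) * t ^ (-(M : ℝ)) := by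
  rw [← log_le_log_iff (by positivity) (by positivity)]
  have hlog := log_le_log (by positivity) h
  simp (disch := positivity) only [log_mul, log_rpow, log_div, log_pow] at hlog ⊢
  linear_combination hlog

theorem statement7 (N : ℕ) :
    ∃ A > 0, ∀ C θ R lam cI lI cJ lJ : ℝ, 0 < C → 0 < θ → θ ≤ 1 → 3 ≤ R →
      0 < lJ → lJ ≤ lI →
      R⁻¹ * (diamUnion cI lI cJ lJ / lJ) ^ θ ≤ lam →
      ∀ Φ : ℝ → ℝ, ContDiff ℝ N Φ →
        (∀ x : ℝ, 2 * lam * lJ < |x - cJ| → Φ x = 0) →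
        (∀ n ≤ N, ∀ x : ℝ, |iteratedDeriv n Φ x| ≤ C * (lam * lJ) ^ (-(n : ℝ))) →
        IsBump cI lI
          (A * C * R ^ (2 * (N : ℝ)) * (lJ / lI) ^ (θ * N / 4 - 1/2) * lam ^ (((N : ℝ) - 1) / 2))
          (⌊θ * (N : ℝ) / 4⌋₊) (fun x => (lam * lJ) ^ (-(1/2 : ℝ)) * Φ x) := by
  refine ⟨4 ^ N, by positivity, ?_⟩
  intro C θ R lam cI lI cJ lJ hC hθ hθ1 hR hlJ hlJI hlam Φ hΦ hsupp hbound
  set M := ⌊θ * (N : ℝ) / 4⌋₊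
  have hMθ : (M : ℝ) ≤ θ * N / 4 := Nat.floor_le (by positivity)
  have hMN : M ≤ N := by
    have : θ * N ≤ N := mul_le_of_le_one_left (by positivity) hθ1
    exact_mod_cast (show (M : ℝ) ≤ N by linarith)
  have hR0 : 0 < R := by linarith
  have hlI : 0 < lI := hlJ.trans_le hlJI
  have hs : 1 ≤ lI / lJ := (one_le_div hlJ).2 hlJI
  have hsP := rpow_div_le_mul_of_diamUnion hθ hR0 hlJ hlI.le hlam
  have hP : 1 ≤ R * lam := (one_le_rpow hs hθ.le).trans hsP
  have hlam0 : 0 < lam := pos_of_mul_pos_right (by linarith) hR0.le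
  refine ⟨contDiff_const.mul (hΦ.of_le (by exact_mod_cast hMN)), fun n hn x => ?_⟩
  rw [iteratedDeriv_const_mul_field, abs_mul, abs_of_pos (by positivity)]
  by_cases hx : 2 * lam * lJ < |x - cJ|
  · rw [iteratedDeriv_eq_zero_of_lt_abs_sub hsupp hx, abs_zero, mul_zero]
    positivity
  have hts := one_add_abs_sub_div_mul_div_le hlI hlJ (le_rpow_inv_mul (by linarith) hP hθ hθ1)
    (diamUnion_le_rpow_inv_mul hθ hR0 hlJ hlI.le hlam) (not_lt.1 hx)
  calc (lam * lJ) ^ (-(1/2 : ℝ)) * |iteratedDeriv n Φ x|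
      ≤ (lam * lJ) ^ (-(1/2 : ℝ)) * (C * (lam * lJ) ^ (-(n : ℝ))) := by
        gcongr
        exact hbound n (hn.trans hMN) x
    _ ≤ _ := rpow_mul_le_of_rpow_mul_pow_le hC hR0 hlam0 hlI hlJ (by positivity)
        (rpow_mul_pow_le hθ hθ1 (by linarith) hs hsP (by positivity) hts hn hMθ)
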